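/- Let 𝔤 be a finite-dimensional real Lie algebra with an invariant inner product ⟨·,·⟩ (i.e. ⟨⁅z,x⁆,y⟩ + ⟨x,⁅z,y⁆⟩ = 0 for all x,y,z ∈ 𝔤). Let 𝔨 ⊆ 𝔤 be a Lie subalgebra and 𝔥 ⊆ 𝔨 an ideal of 𝔨; let 𝔪₀ be the orthogonal complement of 𝔥 in 𝔨, 𝔪′ the orthogonal complement of 𝔨 in 𝔤, and 𝔪 = 𝔪₀ ⊕ 𝔪′. Assume 𝔪′ is a nonzero irreducible 𝔨-module under the adjoint action, and assume neither 𝔥 nor 𝔪₀ is an ideal of 𝔤. Then a vector X ∈ 𝔪 satisfies ⁅X, v⁆ ∈ 𝔥 for all v ∈ 𝔪₀ if and only if X ∈ 𝔪₀ and ⁅X, v⁆ = 0 for all v ∈ 𝔪₀. -/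

import Mathlib

/-!
Write `X = X₀ + X'` with `X₀ ∈ 𝔪₀`, `X' ∈ 𝔪′`. By invariance of the inner product, `⁅𝔨, 𝔪₀⁆ ⊆ 𝔪₀`
and `⁅𝔨, 𝔪′⁆ ⊆ 𝔪′`, so for `v ∈ 𝔪₀` the two parts of `⁅X, v⁆ ∈ 𝔥 ⊆ 𝔨` lie in `𝔪₀` and `𝔪′`; as
`𝔨 ∩ 𝔪′ = 0` and `𝔥 ∩ 𝔪₀ = 0`, both vanish. If `X' ≠ 0`, the centralizer of `𝔪₀` in `𝔪′` is a
nonzero `𝔨`-submodule of `𝔪′`, hence all of `𝔪′`; since `𝔤 = 𝔨 ⊕ 𝔪′`, `𝔪₀` would then be an ideal.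
-/

open LinearMap (BilinForm)
open LinearMap.BilinForm

namespace LinearMap.BilinForm

theorem disjoint_orthogonal_of_anisotropic {R M : Type*} [CommRing R] [AddCommGroup M]
    [Module R M] {B : BilinForm R M} (hB : ∀ x, B x x = 0 → x = 0) (N : Submodule R M) :
    Disjoint N (B.orthogonal N) :=
  Submodule.disjoint_def.2 fun x hN hN' => hB x (mem_orthogonal_iff.1 hN' x hN)

theorem isCompl_orthogonal_of_anisotropic {K V : Type*} [Field K] [AddCommGroup V] [Module K V]
    [FiniteDimensional K V] {B : BilinForm K V} (hrefl : B.IsRefl)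
    (hB : ∀ x, B x x = 0 → x = 0) (N : Submodule K V) : IsCompl N (B.orthogonal N) :=
  (isCompl_orthogonal_iff_disjoint hrefl).2 (disjoint_orthogonal_of_anisotropic hB N)

theorem lie_mem_orthogonal {R L : Type*} [CommRing R] [LieRing L] [LieAlgebra R L]
    {B : BilinForm R L} (hB : B.lieInvariant L) {N : Submodule R L} {x v : L}
    (hx : ∀ w ∈ N, ⁅x, w⁆ ∈ N) (hv : v ∈ B.orthogonal N) : ⁅x, v⁆ ∈ B.orthogonal N := by
  refine mem_orthogonal_iff.2 fun w hw => ?_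
  have hxw : B ⁅x, w⁆ v = 0 := mem_orthogonal_iff.1 hv _ (hx w hw)
  show B w ⁅x, v⁆ = 0
  rw [← neg_eq_zero, ← hB, hxw]

end LinearMap.BilinForm

section Centralizer

variable {R L : Type*} [CommRing R] [LieRing L] [LieAlgebra R L]

def lieCentralizer (S M : Submodule R L) : Submodule R L where
  carrier := {w | w ∈ M ∧ ∀ v ∈ S, ⁅w, v⁆ = 0}
  add_mem' ha hb := ⟨add_mem ha.1 hb.1, fun v hv => by rw [add_lie, ha.2 v hv, hb.2 v hv, add_zero]⟩
  zero_mem' := ⟨zero_mem M, fun v _ => zero_lie v⟩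
  smul_mem' c w hw := ⟨M.smul_mem c hw.1, fun v hv => by rw [smul_lie, hw.2 v hv, smul_zero]⟩

theorem mem_lieCentralizer {S M : Submodule R L} {w : L} :
    w ∈ lieCentralizer S M ↔ w ∈ M ∧ ∀ v ∈ S, ⁅w, v⁆ = 0 :=
  Iff.rfl

theorem lieCentralizer_le (S M : Submodule R L) : lieCentralizer S M ≤ M :=
  fun _ hw => hw.1

theorem lie_mem_lieCentralizer {S M : Submodule R L} {x w : L} (hS : ∀ v ∈ S, ⁅x, v⁆ ∈ S)
    (hM : ∀ m ∈ M, ⁅x, m⁆ ∈ M) (hw : w ∈ lieCentralizer S M) : ⁅x, w⁆ ∈ lieCentralizer S M := by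
  refine ⟨hM w hw.1, fun v hv => ?_⟩
  rw [lie_lie, hw.2 v hv, hw.2 _ (hS v hv), lie_zero, sub_zero]

theorem lie_mem_of_sup_eq_top {K M S : Submodule R L} (hKM : K ⊔ M = ⊤)
    (hK : ∀ k ∈ K, ∀ v ∈ S, ⁅k, v⁆ ∈ S) (hM : ∀ m ∈ M, ∀ v ∈ S, ⁅m, v⁆ = 0) (x : L) :
    ∀ v ∈ S, ⁅x, v⁆ ∈ S := by
  obtain ⟨k, hk, m, hm, rfl⟩ := Submodule.mem_sup.1 (hKM ▸ Submodule.mem_top : x ∈ K ⊔ M)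
  intro v hv
  rw [add_lie, hM m hm v hv, add_zero]
  exact hK k hk v hv

theorem lieCentralizer_eq_bot {K M S : Submodule R L} (hKM : K ⊔ M = ⊤)
    (hKS : ∀ k ∈ K, ∀ v ∈ S, ⁅k, v⁆ ∈ S) (hKM_lie : ∀ k ∈ K, ∀ m ∈ M, ⁅k, m⁆ ∈ M)
    (hirr : ∀ W ≤ M, (∀ k ∈ K, ∀ w ∈ W, ⁅k, w⁆ ∈ W) → W = ⊥ ∨ W = M)
    (hS : ¬ ∀ x : L, ∀ v ∈ S, ⁅x, v⁆ ∈ S) : lieCentralizer S M = ⊥ := by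
  refine (hirr _ (lieCentralizer_le S M) fun k hk w hw =>
    lie_mem_lieCentralizer (hKS k hk) (hKM_lie k hk) hw).resolve_right fun hC => hS ?_
  exact lie_mem_of_sup_eq_top hKM hKS fun m hm => (mem_lieCentralizer.1 (hC.symm ▸ hm)).2

end Centralizer

theorem Submodule.eq_zero_of_add_mem_of_disjoint {R M : Type*} [Ring R] [AddCommGroup M]
    [Module R M] {H K P Q : Submodule R M} (hHK : H ≤ K) (hPK : P ≤ K) (hKQ : Disjoint K Q)
    (hHP : Disjoint H P) {a b : M} (ha : a ∈ P) (hb : b ∈ Q) (hab : a + b ∈ H) :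
    a = 0 ∧ b = 0 := by
  have hb0 : b = 0 :=
    disjoint_def.1 hKQ b ((Submodule.add_mem_iff_right K (hPK ha)).1 (hHK hab)) hb
  rw [hb0, add_zero] at hab
  exact ⟨disjoint_def.1 hHP a hab ha, hb0⟩

theorem bracket_mem_h_iff_mem_center_of_m0_general
    {L : Type*} [LieRing L] [LieAlgebra ℝ L] [FiniteDimensional ℝ L]
    (B : L →ₗ[ℝ] L →ₗ[ℝ] ℝ)
    (hBsymm : ∀ x y : L, B x y = B y x)
    (hBpos : ∀ x : L, x ≠ 0 → 0 < B x x)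
    (hBinv : ∀ x y z : L, B ⁅z, x⁆ y + B x ⁅z, y⁆ = 0)
    (𝔨 : Submodule ℝ L) (h𝔨 : ∀ x ∈ 𝔨, ∀ y ∈ 𝔨, ⁅x, y⁆ ∈ 𝔨)
    (𝔥 : Submodule ℝ L) (h𝔥𝔨 : 𝔥 ≤ 𝔨)
    (h𝔥ideal : ∀ x ∈ 𝔨, ∀ y ∈ 𝔥, ⁅x, y⁆ ∈ 𝔥)
    (𝔪₀ : Submodule ℝ L)
    (h𝔪₀ : ∀ v : L, v ∈ 𝔪₀ ↔ v ∈ 𝔨 ∧ ∀ w ∈ 𝔥, B v w = 0)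
    (𝔪' : Submodule ℝ L)
    (h𝔪' : ∀ v : L, v ∈ 𝔪' ↔ ∀ w ∈ 𝔨, B v w = 0)
    (𝔪 : Submodule ℝ L) (h𝔪 : 𝔪 = 𝔪₀ ⊔ 𝔪')
    (h𝔪'irr : ∀ W : Submodule ℝ L, W ≤ 𝔪' →
      (∀ x ∈ 𝔨, ∀ v ∈ W, ⁅x, v⁆ ∈ W) → W = ⊥ ∨ W = 𝔪')
    (h𝔪₀notideal : ¬ (∀ x : L, ∀ v ∈ 𝔪₀, ⁅x, v⁆ ∈ 𝔪₀)) :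
    ∀ X ∈ 𝔪, ((∀ v ∈ 𝔪₀, ⁅X, v⁆ ∈ 𝔥) ↔ (X ∈ 𝔪₀ ∧ ∀ v ∈ 𝔪₀, ⁅X, v⁆ = 0)) := by
  have hinv : BilinForm.lieInvariant L B := fun x y z => eq_neg_of_add_eq_zero_left (hBinv y z x)
  have hanis : ∀ x, B x x = 0 → x = 0 := fun x hx => by_contra fun h => (hBpos x h).ne' hx
  have h𝔪'_eq : 𝔪' = orthogonal B 𝔨 := by
    ext v; simp only [h𝔪', mem_orthogonal_iff, hBsymm]
  have h𝔪₀_eq : 𝔪₀ = 𝔨 ⊓ orthogonal B 𝔥 := by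
    ext v; simp only [h𝔪₀, Submodule.mem_inf, mem_orthogonal_iff, hBsymm]
  have h𝔪₀𝔨 : 𝔪₀ ≤ 𝔨 := h𝔪₀_eq ▸ inf_le_left
  have h𝔨𝔪' : IsCompl 𝔨 𝔪' :=
    h𝔪'_eq ▸ isCompl_orthogonal_of_anisotropic (fun x y h => (hBsymm y x).trans h) hanis 𝔨
  have h𝔥𝔪₀ : Disjoint 𝔥 𝔪₀ :=
    h𝔪₀_eq ▸ (disjoint_orthogonal_of_anisotropic hanis 𝔥).mono_right inf_le_right
  have h𝔨_lie_𝔪' : ∀ x ∈ 𝔨, ∀ v ∈ 𝔪', ⁅x, v⁆ ∈ 𝔪' := by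
    rw [h𝔪'_eq]; exact fun x hx _ hv => lie_mem_orthogonal hinv (h𝔨 x hx) hv
  have h𝔨_lie_𝔪₀ : ∀ x ∈ 𝔨, ∀ v ∈ 𝔪₀, ⁅x, v⁆ ∈ 𝔪₀ := by
    rw [h𝔪₀_eq]
    exact fun x hx v hv => ⟨h𝔨 x hx v hv.1, lie_mem_orthogonal hinv (h𝔥ideal x hx) hv.2⟩
  intro X hX
  refine ⟨fun hX𝔥 => ?_, fun ⟨_, hX0⟩ v hv => (hX0 v hv).symm ▸ zero_mem 𝔥⟩
  obtain ⟨X₀, hX₀, X', hX', rfl⟩ := Submodule.mem_sup.1 (h𝔪 ▸ hX)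
  have hcomm : ∀ v ∈ 𝔪₀, ⁅X₀, v⁆ = 0 ∧ ⁅X', v⁆ = 0 := fun v hv => by
    have hX'v : ⁅X', v⁆ ∈ 𝔪' := by
      rw [← lie_skew]; exact neg_mem (h𝔨_lie_𝔪' v (h𝔪₀𝔨 hv) X' hX')
    exact Submodule.eq_zero_of_add_mem_of_disjoint h𝔥𝔨 h𝔪₀𝔨 h𝔨𝔪'.disjoint h𝔥𝔪₀
      (h𝔨_lie_𝔪₀ X₀ (h𝔪₀𝔨 hX₀) v hv) hX'v (add_lie X₀ X' v ▸ hX𝔥 v hv)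
  have hX'0 : X' = 0 := by
    have hC := lieCentralizer_eq_bot h𝔨𝔪'.sup_eq_top h𝔨_lie_𝔪₀ h𝔨_lie_𝔪' h𝔪'irr h𝔪₀notideal
    exact (Submodule.mem_bot ℝ).1 (hC ▸ ⟨hX', fun v hv => (hcomm v hv).2⟩)
  rw [hX'0, add_zero]
  exact ⟨hX₀, fun v hv => (hcomm v hv).1⟩

/-- With `𝔥 ⊆ 𝔨 ⊆ 𝔤`, `𝔥` an ideal of the subalgebra `𝔨`, `𝔪₀ = 𝔥ᗮ ∩ 𝔨`, `𝔪′ = 𝔨ᗮ`,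
`𝔪 = 𝔪₀ ⊕ 𝔪′`, `𝔪′` a nonzero irreducible `𝔨`-module and neither `𝔥` nor `𝔪₀` an ideal
of `𝔤`: a vector `X ∈ 𝔪` satisfies `⁅X, 𝔪₀⁆ ⊆ 𝔥` if and only if `X ∈ 𝔪₀` and
`⁅X, 𝔪₀⁆ = 0`. -/
theorem bracket_mem_h_iff_mem_center_of_m0
    {L : Type*} [LieRing L] [LieAlgebra ℝ L] [FiniteDimensional ℝ L]
    (B : L →ₗ[ℝ] L →ₗ[ℝ] ℝ)
    (hBsymm : ∀ x y : L, B x y = B y x)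
    (hBpos : ∀ x : L, x ≠ 0 → 0 < B x x)
    (hBinv : ∀ x y z : L, B ⁅z, x⁆ y + B x ⁅z, y⁆ = 0)
    (𝔨 : Submodule ℝ L) (h𝔨 : ∀ x ∈ 𝔨, ∀ y ∈ 𝔨, ⁅x, y⁆ ∈ 𝔨)
    (𝔥 : Submodule ℝ L) (h𝔥𝔨 : 𝔥 ≤ 𝔨)
    (h𝔥ideal : ∀ x ∈ 𝔨, ∀ y ∈ 𝔥, ⁅x, y⁆ ∈ 𝔥)
    (𝔪₀ : Submodule ℝ L)
    (h𝔪₀ : ∀ v : L, v ∈ 𝔪₀ ↔ v ∈ 𝔨 ∧ ∀ w ∈ 𝔥, B v w = 0)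
    (𝔪' : Submodule ℝ L)
    (h𝔪' : ∀ v : L, v ∈ 𝔪' ↔ ∀ w ∈ 𝔨, B v w = 0)
    (𝔪 : Submodule ℝ L) (h𝔪 : 𝔪 = 𝔪₀ ⊔ 𝔪')
    (h𝔪'ne : 𝔪' ≠ ⊥)
    (h𝔪'irr : ∀ W : Submodule ℝ L, W ≤ 𝔪' →
      (∀ x ∈ 𝔨, ∀ v ∈ W, ⁅x, v⁆ ∈ W) → W = ⊥ ∨ W = 𝔪')
    (h𝔥notideal : ¬ (∀ x : L, ∀ v ∈ 𝔥, ⁅x, v⁆ ∈ 𝔥))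
    (h𝔪₀notideal : ¬ (∀ x : L, ∀ v ∈ 𝔪₀, ⁅x, v⁆ ∈ 𝔪₀)) :
    ∀ X ∈ 𝔪, ((∀ v ∈ 𝔪₀, ⁅X, v⁆ ∈ 𝔥) ↔ (X ∈ 𝔪₀ ∧ ∀ v ∈ 𝔪₀, ⁅X, v⁆ = 0)) :=
  bracket_mem_h_iff_mem_center_of_m0_general B hBsymm hBpos hBinv 𝔨 h𝔨 𝔥 h𝔥𝔨 h𝔥ideal 𝔪₀ h𝔪₀ 𝔪' h𝔪' 𝔪
    h𝔪 h𝔪'irr h𝔪₀notideal
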